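/- arXiv:2507.20150 — 6 statements merged into one kernel-verified Lean document; each statement's English description precedes it below -/
import Mathlib

section
/- Continuity of the deterministic optimal policy map under uniqueness: let R₀ ∈ C(S×A) and suppose there is an open neighborhood N(R₀) of R₀ in (C(S×A), ‖·‖∞) such that for every R ∈ N(R₀) and every s ∈ S the set A*(s;R) is a singleton {a*(s;R)}. Then for every sequence (Rₙ) in N(R₀) with ‖Rₙ − R₀‖∞ → 0 and every s ∈ S, a*(s;Rₙ) → a*(s;R₀) in A; that is, the policy map R ↦ (s ↦ a*(s;R)) is continuous at R₀ in the topology of pointwise convergence. -/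
open MeasureTheory ProbabilityTheory Filter Topology

section Aux

variable {S A : Type*}
    [MetricSpace S] [CompactSpace S] [MeasurableSpace S] [BorelSpace S]
    [MetricSpace A] [CompactSpace A] [Nonempty A] [MeasurableSpace A] [BorelSpace A]

/-- Continuity of `s ↦ ⨆ a, Q (s, a)`. -/
lemma aux_sup_continuous (Q : C(S × A, ℝ)) :
    Continuous fun s : S => ⨆ a : A, Q (s, a) := by
  have : Continuous fun s : S => sSup ((fun a => Q (s, a)) '' Set.univ) := by
    apply IsCompact.continuous_sSup isCompact_univ
    exact Q.continuous.comp continuous_id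
  simpa [Set.image_univ, iSup] using this

lemma aux_bdd (Q : C(S × A, ℝ)) (s : S) :
    BddAbove (Set.range fun a : A => Q (s, a)) :=
  (isCompact_range (Q.continuous.comp (Continuous.prodMk_right s))).bddAbove

/-- The contraction estimate: `‖Q* R - Q* R'‖ ≤ (1 - γ)⁻¹ * ‖R - R'‖`. -/
lemma aux_contraction (γ : ℝ) (hγ0 : 0 ≤ γ) (hγ1 : γ < 1)
    (P : Kernel (S × A) S) [IsMarkovKernel P]
    (Qstar : C(S × A, ℝ) → C(S × A, ℝ))
    (hQstar : ∀ (R : C(S × A, ℝ)) (p : S × A),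
      Qstar R p = R p + γ * ∫ s', (⨆ a' : A, Qstar R (s', a')) ∂(P p))
    (R R' : C(S × A, ℝ)) :
    ‖Qstar R - Qstar R'‖ ≤ (1 - γ)⁻¹ * ‖R - R'‖ := by
  set D := ‖Qstar R - Qstar R'‖ with hD
  have hDnn : 0 ≤ D := norm_nonneg _
  have hpt : ∀ p : S × A, |Qstar R p - Qstar R' p| ≤ D := by
    intro p
    have := (Qstar R - Qstar R').norm_coe_le_norm p
    simpa [Real.norm_eq_abs] using this
  -- pointwise bound on the sup difference
  have hsup : ∀ s' : S,
      |(⨆ a' : A, Qstar R (s', a')) - ⨆ a' : A, Qstar R' (s', a')| ≤ D := by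
    intro s'
    rw [abs_sub_le_iff]
    constructor
    · rw [sub_le_iff_le_add, add_comm]
      refine ciSup_le fun a => ?_
      have h1 : Qstar R (s', a) ≤ Qstar R' (s', a) + D := by
        have := (abs_le.mp (hpt (s', a))).2
        linarith
      exact h1.trans (add_le_add_left (le_ciSup (aux_bdd (Qstar R') s') a) D)
    · rw [sub_le_iff_le_add, add_comm]
      refine ciSup_le fun a => ?_
      have h1 : Qstar R' (s', a) ≤ Qstar R (s', a) + D := by
        have := (abs_le.mp (hpt (s', a))).1
        linarith
      exact h1.trans (add_le_add_left (le_ciSup (aux_bdd (Qstar R) s') a) D)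
  -- integrability
  have hint : ∀ (Q : C(S × A, ℝ)) (p : S × A),
      Integrable (fun s' : S => ⨆ a' : A, Q (s', a')) (P p) := by
    intro Q p
    refine (aux_sup_continuous Q).integrable_of_hasCompactSupport ?_
    exact IsCompact.of_isClosed_subset isCompact_univ (isClosed_tsupport _) (Set.subset_univ _)
  have key : ∀ p : S × A, |Qstar R p - Qstar R' p| ≤ ‖R - R'‖ + γ * D := by
    intro p
    have hR : |R p - R' p| ≤ ‖R - R'‖ := by
      have := (R - R').norm_coe_le_norm p
      simpa [Real.norm_eq_abs] using this
    have hI : |(∫ s', (⨆ a' : A, Qstar R (s', a')) ∂(P p)) -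
        ∫ s', (⨆ a' : A, Qstar R' (s', a')) ∂(P p)| ≤ D := by
      rw [← integral_sub (hint (Qstar R) p) (hint (Qstar R') p)]
      have := norm_integral_le_of_norm_le_const (μ := P p)
        (f := fun s' => (⨆ a' : A, Qstar R (s', a')) - ⨆ a' : A, Qstar R' (s', a'))
        (C := D) (Eventually.of_forall fun s' => by
          simpa [Real.norm_eq_abs] using hsup s')
      simpa [Real.norm_eq_abs, measure_univ] using this
    have heq : Qstar R p - Qstar R' p = (R p - R' p) +
        γ * ((∫ s', (⨆ a' : A, Qstar R (s', a')) ∂(P p)) -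
          ∫ s', (⨆ a' : A, Qstar R' (s', a')) ∂(P p)) := by
      rw [hQstar R p, hQstar R' p]; ring
    calc |Qstar R p - Qstar R' p|
        ≤ |R p - R' p| + γ * |(∫ s', (⨆ a' : A, Qstar R (s', a')) ∂(P p)) -
            ∫ s', (⨆ a' : A, Qstar R' (s', a')) ∂(P p)| := by
          rw [heq]
          refine (abs_add_le _ _).trans ?_
          gcongr
          rw [abs_mul, abs_of_nonneg hγ0]
      _ ≤ ‖R - R'‖ + γ * D := by gcongr
  have hDle : D ≤ ‖R - R'‖ + γ * D := by
    rw [hD]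
    refine ContinuousMap.norm_le _ (by positivity) |>.mpr fun p => ?_
    simpa [Real.norm_eq_abs] using key p
  have h1γ : 0 < 1 - γ := by linarith
  have h2 : (1 - γ) * D ≤ ‖R - R'‖ := by linarith
  have h3 : (1 - γ)⁻¹ * ((1 - γ) * D) ≤ (1 - γ)⁻¹ * ‖R - R'‖ :=
    mul_le_mul_of_nonneg_left h2 (inv_pos.mpr h1γ).le
  rwa [← mul_assoc, inv_mul_cancel₀ h1γ.ne', one_mul] at h3

end Aux

/-- Continuity of the deterministic optimal policy map under uniqueness:
if on an open neighborhood `U` of `R₀` the argmax set `A*(s;R)` is a singleton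
`{a*(s;R)}` for every `R ∈ U` and every `s`, then for every sequence `Rₙ` in `U` with
`‖Rₙ - R₀‖ → 0` and every `s`, `a*(s;Rₙ) → a*(s;R₀)` (pointwise convergence of the
policy map). -/
theorem policy_map_continuous_under_uniqueness
    {S A : Type*}
    [MetricSpace S] [CompactSpace S] [MeasurableSpace S] [BorelSpace S]
    [MetricSpace A] [CompactSpace A] [Nonempty A] [MeasurableSpace A] [BorelSpace A]
    (γ : ℝ) (hγ0 : 0 ≤ γ) (hγ1 : γ < 1)
    (P : Kernel (S × A) S) [IsMarkovKernel P]
    (hFeller : ∀ f : C(S, ℝ), Continuous fun p : S × A => ∫ s', f s' ∂(P p))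
    (Qstar : C(S × A, ℝ) → C(S × A, ℝ))
    (hQstar : ∀ (R : C(S × A, ℝ)) (p : S × A),
      Qstar R p = R p + γ * ∫ s', (⨆ a' : A, Qstar R (s', a')) ∂(P p))
    (R₀ : C(S × A, ℝ)) (U : Set C(S × A, ℝ)) (hUopen : IsOpen U) (hR₀U : R₀ ∈ U)
    (astar : C(S × A, ℝ) → S → A)
    (hsingleton : ∀ R ∈ U, ∀ s : S,
      {a : A | ∀ b : A, Qstar R (s, b) ≤ Qstar R (s, a)} = {astar R s})
    (Rn : ℕ → C(S × A, ℝ)) (hRnU : ∀ n, Rn n ∈ U)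
    (hconv : Tendsto (fun n => ‖Rn n - R₀‖) atTop (𝓝 0)) :
    ∀ s : S, Tendsto (fun n => astar (Rn n) s) atTop (𝓝 (astar R₀ s)) := by
  -- uniform convergence of `Qstar (Rn n)` to `Qstar R₀`
  have hQconv : Tendsto (fun n => ‖Qstar (Rn n) - Qstar R₀‖) atTop (𝓝 0) := by
    have hb : ∀ n, ‖Qstar (Rn n) - Qstar R₀‖ ≤ (1 - γ)⁻¹ * ‖Rn n - R₀‖ :=
      fun n => aux_contraction γ hγ0 hγ1 P Qstar hQstar (Rn n) R₀
    have : Tendsto (fun n => (1 - γ)⁻¹ * ‖Rn n - R₀‖) atTop (𝓝 0) := by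
      simpa using hconv.const_mul (1 - γ)⁻¹
    exact squeeze_zero (fun n => norm_nonneg _) hb this
  intro s
  apply tendsto_of_subseq_tendsto
  intro ns hns
  obtain ⟨b, -, φ, hφ, hb⟩ :=
    isCompact_univ.tendsto_subseq (x := fun k => astar (Rn (ns k)) s)
      (fun k => Set.mem_univ _)
  refine ⟨φ, ?_⟩
  -- show b = astar R₀ s
  suffices hbmem : b = astar R₀ s by rwa [← hbmem]
  have hmem : b ∈ {a : A | ∀ c : A, Qstar R₀ (s, c) ≤ Qstar R₀ (s, a)} := by
    intro c
    -- subsequence indices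
    set m : ℕ → ℕ := fun k => ns (φ k) with hm
    have hmtop : Tendsto m atTop atTop := hns.comp hφ.tendsto_atTop
    have hnorm0 : Tendsto (fun k => ‖Qstar (Rn (m k)) - Qstar R₀‖) atTop (𝓝 0) :=
      hQconv.comp hmtop
    have hptle : ∀ (k : ℕ) (p : S × A),
        |Qstar (Rn (m k)) p - Qstar R₀ p| ≤ ‖Qstar (Rn (m k)) - Qstar R₀‖ := by
      intro k p
      have := (Qstar (Rn (m k)) - Qstar R₀).norm_coe_le_norm p
      simpa [Real.norm_eq_abs] using this
    -- LHS limit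
    have hL : Tendsto (fun k => Qstar (Rn (m k)) (s, c)) atTop (𝓝 (Qstar R₀ (s, c))) := by
      rw [tendsto_iff_dist_tendsto_zero]
      refine squeeze_zero (fun k => dist_nonneg) (fun k => ?_) hnorm0
      simpa [Real.dist_eq] using hptle k (s, c)
    -- RHS limit
    have hRa : Tendsto (fun k => Qstar R₀ (s, astar (Rn (m k)) s)) atTop
        (𝓝 (Qstar R₀ (s, b))) := by
      have hcont : Continuous fun a : A => Qstar R₀ (s, a) :=
        (Qstar R₀).continuous.comp (Continuous.prodMk_right s)
      exact (hcont.tendsto b).comp hb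
    have hRdiff : Tendsto (fun k => Qstar (Rn (m k)) (s, astar (Rn (m k)) s)
        - Qstar R₀ (s, astar (Rn (m k)) s)) atTop (𝓝 0) := by
      rw [tendsto_iff_dist_tendsto_zero]
      refine squeeze_zero (fun k => dist_nonneg) (fun k => ?_) hnorm0
      simpa [Real.dist_eq] using hptle k (s, astar (Rn (m k)) s)
    have hR : Tendsto (fun k => Qstar (Rn (m k)) (s, astar (Rn (m k)) s)) atTop
        (𝓝 (Qstar R₀ (s, b))) := by
      have := hRdiff.add hRa
      simpa using this
    -- pass the inequality to the limit
    refine le_of_tendsto_of_tendsto' hL hR fun k => ?_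
    have hset := hsingleton (Rn (m k)) (hRnU (m k)) s
    have : astar (Rn (m k)) s ∈
        {a : A | ∀ c : A, Qstar (Rn (m k)) (s, c) ≤ Qstar (Rn (m k)) (s, a)} := by
      rw [hset]; rfl
    exact this c
  have hset₀ := hsingleton R₀ hR₀U s
  rw [hset₀] at hmem
  exact hmem
end

section
/- Discontinuity under non-uniqueness (constructive core): suppose for R₀ ∈ C(S×A) there exists a state s₀ ∈ S such that A*(s₀;R₀) is finite with at least two distinct elements, and let a₂ ∈ A*(s₀;R₀). Then for every δ > 0 there exists R' ∈ C(S×A) with ‖R' − R₀‖∞ ≤ δ and A*(s₀;R') = {a₂}. Consequently, any policy selection map R ↦ π_R with π_R(s) ∈ A*(s;R) for all s and π_{R₀}(s₀) = a₁ for some a₁ ∈ A*(s₀;R₀) with a₁ ≠ a₂ is discontinuous at R₀ in the topology of pointwise convergence of policies. -/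
/-!
The optimal Q-function `Q*_R` is the fixed point of `Q ↦ R + γ • E Q`, where `E` (expected
maximum over the next action) is `1`-Lipschitz in the sup norm. Conversely every continuous `Q`
is `Q*_R` for `R = Q - γ • E Q`, and this inverse is `2`-Lipschitz. Adding to `Q*_{R₀}` a
small multiple of a function of the action strictly peaked at `a₂` therefore yields a reward
within `δ` of `R₀` whose unique greedy action at `s₀` is `a₂`; since the selection picks
`a₁ ≠ a₂` at `R₀`, it cannot be continuous there.
-/

open MeasureTheory ProbabilityTheory Filter Topology

theorem abs_ciSup_sub_ciSup_le {ι : Type*} [Nonempty ι] {F G : ι → ℝ}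
    (hF : BddAbove (Set.range F)) (hG : BddAbove (Set.range G)) {c : ℝ}
    (h : ∀ i, |F i - G i| ≤ c) : |(⨆ i, F i) - ⨆ i, G i| ≤ c := by
  rw [abs_sub_le_iff, sub_le_iff_le_add, sub_le_iff_le_add]
  constructor
  · exact ciSup_le fun i => by linarith [(abs_sub_le_iff.mp (h i)).1, le_ciSup hG i]
  · exact ciSup_le fun i => by linarith [(abs_sub_le_iff.mp (h i)).2, le_ciSup hF i]

theorem setOf_forall_add_le_add_eq_singleton {ι : Type*} {f g : ι → ℝ} {i₀ : ι}
    (hf : ∀ i, f i ≤ f i₀) (hg : ∀ i ≠ i₀, g i < g i₀) :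
    {i | ∀ j, f j + g j ≤ f i + g i} = {i₀} := by
  ext i
  refine ⟨fun hi => by_contra fun hne => ?_, fun hi j => ?_⟩
  · linarith [hi i₀, hf i, hg i hne]
  · rw [Set.mem_singleton_iff.mp hi]
    rcases eq_or_ne j i₀ with rfl | hj
    · rfl
    · linarith [hf j, hg j hj]

namespace ContinuousMap

variable {X Y : Type*} [TopologicalSpace X] [TopologicalSpace Y] [CompactSpace Y]

noncomputable def iSupSnd (Q : C(X × Y, ℝ)) : C(X, ℝ) where
  toFun x := ⨆ y, Q (x, y)
  continuous_toFun := by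
    simpa [Set.image_univ, iSup] using
      isCompact_univ.continuous_sSup (f := fun x y => Q (x, y)) Q.continuous

theorem lipschitzWith_iSupSnd [CompactSpace X] [Nonempty Y] :
    LipschitzWith 1 (iSupSnd : C(X × Y, ℝ) → C(X, ℝ)) := by
  refine LipschitzWith.of_dist_le_mul fun Q Q' => ?_
  rw [NNReal.coe_one, one_mul, dist_le dist_nonneg]
  intro x
  have hbdd (Q : C(X × Y, ℝ)) : BddAbove (Set.range fun y => Q (x, y)) :=
    (isCompact_range (by fun_prop)).bddAbove
  exact abs_ciSup_sub_ciSup_le (hbdd Q) (hbdd Q') fun y =>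
    (Real.dist_eq _ _).symm.trans_le (dist_apply_le_dist (x, y))

end ContinuousMap

theorem ContinuousMap.exists_norm_le_one_and_lt_of_ne {X Y : Type*} [TopologicalSpace X]
    [CompactSpace X] [MetricSpace Y] [CompactSpace Y] (y₀ : Y) :
    ∃ G : C(X × Y, ℝ), ‖G‖ ≤ 1 ∧ ∀ x, ∀ y ≠ y₀, G (x, y) < G (x, y₀) := by
  refine ⟨⟨fun p => -min (dist p.2 y₀) 1, by fun_prop⟩, ?_, fun x y hy => ?_⟩
  · refine (ContinuousMap.norm_le _ zero_le_one).mpr fun p => ?_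
    simp only [ContinuousMap.coe_mk, norm_neg, Real.norm_eq_abs]
    exact abs_le.mpr ⟨by linarith [le_min (dist_nonneg (x := p.2) (y := y₀)) zero_le_one],
      min_le_right _ _⟩
  · simpa using lt_min (dist_pos.mpr hy) one_pos

section FellerKernel

variable {X S : Type*} [TopologicalSpace X] [MeasurableSpace X]
  [TopologicalSpace S] [CompactSpace S] [MeasurableSpace S] [OpensMeasurableSpace S]

theorem dist_integral_le_dist (μ : Measure S) [IsProbabilityMeasure μ] (f g : C(S, ℝ)) :
    dist (∫ s, f s ∂μ) (∫ s, g s ∂μ) ≤ dist f g := by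
  have hint (f : C(S, ℝ)) : Integrable f μ :=
    (BoundedContinuousFunction.mkOfCompact f).integrable μ
  rw [dist_eq_norm, ← integral_sub (hint f) (hint g)]
  simpa using norm_integral_le_of_norm_le_const (μ := μ)
    (Eventually.of_forall fun s => (dist_eq_norm _ _).symm.trans_le (f.dist_apply_le_dist s))

noncomputable def fellerIntegral (P : Kernel X S)
    (hP : ∀ f : C(S, ℝ), Continuous fun x => ∫ s, f s ∂(P x))
    (f : C(S, ℝ)) : C(X, ℝ) :=
  ⟨fun x => ∫ s, f s ∂(P x), hP f⟩

theorem lipschitzWith_fellerIntegral [CompactSpace X] (P : Kernel X S) [IsMarkovKernel P]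
    (hP : ∀ f : C(S, ℝ), Continuous fun x => ∫ s, f s ∂(P x)) :
    LipschitzWith 1 (fellerIntegral P hP) :=
  LipschitzWith.of_dist_le_mul fun f g => by
    rw [NNReal.coe_one, one_mul, ContinuousMap.dist_le dist_nonneg]
    exact fun x => dist_integral_le_dist (P x) f g

end FellerKernel

section LipschitzFixedPoint

variable {V : Type*} [NormedAddCommGroup V] [NormedSpace ℝ V] {E : V → V} {γ : ℝ}

theorem eq_of_eq_add_smul_of_lipschitzWith (hE : LipschitzWith 1 E) (hγ0 : 0 ≤ γ)
    (hγ1 : γ < 1) {r x y : V} (hx : x = r + γ • E x) (hy : y = r + γ • E y) : x = y := by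
  have hdiff : x - y = γ • (E x - E y) := calc
    x - y = (r + γ • E x) - (r + γ • E y) := by rw [← hx, ← hy]
    _ = γ • (E x - E y) := by rw [smul_sub]; abel
  have hxy : ‖x - y‖ ≤ γ * ‖x - y‖ := calc
    ‖x - y‖ = γ * ‖E x - E y‖ := by rw [hdiff, norm_smul, Real.norm_of_nonneg hγ0]
    _ ≤ γ * ‖x - y‖ := by
        gcongr; simpa [dist_eq_norm] using hE.dist_le_mul x y
  have : ‖x - y‖ = 0 := by nlinarith [norm_nonneg (x - y)]
  exact sub_eq_zero.mp (norm_eq_zero.mp this)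

theorem norm_sub_smul_sub_sub_smul_le (hE : LipschitzWith 1 E) (hγ0 : 0 ≤ γ) (hγ1 : γ ≤ 1)
    (x y : V) : ‖(x - γ • E x) - (y - γ • E y)‖ ≤ 2 * ‖x - y‖ := calc
  ‖(x - γ • E x) - (y - γ • E y)‖ = ‖(x - y) - γ • (E x - E y)‖ := by
      rw [smul_sub]; congr 1; abel
  _ ≤ ‖x - y‖ + γ * ‖E x - E y‖ := by
      grw [norm_sub_le, norm_smul, Real.norm_of_nonneg hγ0]
  _ ≤ ‖x - y‖ + 1 * ‖x - y‖ := by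
      gcongr
      · simpa [dist_eq_norm] using hE.dist_le_mul x y
  _ = 2 * ‖x - y‖ := by ring

theorem exists_apply_eq_and_norm_sub_le (hE : LipschitzWith 1 E) (hγ0 : 0 ≤ γ) (hγ1 : γ < 1)
    {Φ : V → V} (hΦ : ∀ r, Φ r = r + γ • E (Φ r)) (r₀ x : V) :
    ∃ r, Φ r = x ∧ ‖r - r₀‖ ≤ 2 * ‖x - Φ r₀‖ := by
  refine ⟨x - γ • E x, eq_of_eq_add_smul_of_lipschitzWith hE hγ0 hγ1 (hΦ _) (by abel), ?_⟩
  have hr₀ : r₀ = Φ r₀ - γ • E (Φ r₀) := eq_sub_of_add_eq (hΦ r₀).symm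
  conv_lhs => rw [hr₀]
  exact norm_sub_smul_sub_sub_smul_le hE hγ0 hγ1.le x (Φ r₀)

end LipschitzFixedPoint

theorem not_continuousAt_of_frequently_eq {X Y : Type*} [TopologicalSpace X]
    [TopologicalSpace Y] [T1Space Y] {f : X → Y} {x₀ : X} {y : Y} (hne : f x₀ ≠ y)
    (h : ∃ᶠ x in 𝓝 x₀, f x = y) :
    ¬ ContinuousAt f x₀ := fun hf =>
  h (hf.eventually_ne hne)

theorem policy_discontinuity_under_nonuniqueness_general
    {S A : Type*}
    [MetricSpace S] [CompactSpace S] [MeasurableSpace S] [BorelSpace S]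
    [MetricSpace A] [CompactSpace A] [Nonempty A] [MeasurableSpace A]
    (γ : ℝ) (hγ0 : 0 ≤ γ) (hγ1 : γ < 1)
    (P : Kernel (S × A) S) [IsMarkovKernel P]
    (hFeller : ∀ f : C(S, ℝ), Continuous fun p : S × A => ∫ s', f s' ∂(P p))
    (Qstar : C(S × A, ℝ) → C(S × A, ℝ))
    (hQstar : ∀ (R : C(S × A, ℝ)) (p : S × A),
      Qstar R p = R p + γ * ∫ s', (⨆ a' : A, Qstar R (s', a')) ∂(P p))
    (R₀ : C(S × A, ℝ)) (s₀ : S)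
    (a₁ a₂ : A)
    (ha₂ : a₂ ∈ {a : A | ∀ b : A, Qstar R₀ (s₀, b) ≤ Qstar R₀ (s₀, a)})
    (hne : a₁ ≠ a₂) :
    (∀ δ > (0 : ℝ), ∃ R' : C(S × A, ℝ), ‖R' - R₀‖ ≤ δ ∧
      {a : A | ∀ b : A, Qstar R' (s₀, b) ≤ Qstar R' (s₀, a)} = {a₂}) ∧
    (∀ pol : C(S × A, ℝ) → S → A,
      (∀ (R : C(S × A, ℝ)) (s : S),
        pol R s ∈ {a : A | ∀ b : A, Qstar R (s, b) ≤ Qstar R (s, a)}) →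
      pol R₀ s₀ = a₁ → ¬ ContinuousAt pol R₀) := by
  have hE := (lipschitzWith_fellerIntegral P hFeller).comp
    (ContinuousMap.lipschitzWith_iSupSnd (X := S) (Y := A))
  have hBellman (R : C(S × A, ℝ)) :
      Qstar R = R + γ • (fellerIntegral P hFeller ∘ ContinuousMap.iSupSnd) (Qstar R) :=
    ContinuousMap.ext (hQstar R)
  have hperturb : ∀ δ > (0 : ℝ), ∃ R' : C(S × A, ℝ), ‖R' - R₀‖ ≤ δ ∧
      {a : A | ∀ b : A, Qstar R' (s₀, b) ≤ Qstar R' (s₀, a)} = {a₂} := by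
    intro δ hδ
    obtain ⟨G, hG, hGpeak⟩ := ContinuousMap.exists_norm_le_one_and_lt_of_ne (X := S) a₂
    obtain ⟨R', hR'Q, hR'⟩ := exists_apply_eq_and_norm_sub_le (by simpa using hE) hγ0 hγ1
      hBellman R₀ (Qstar R₀ + (δ / 2) • G)
    refine ⟨R', ?_, ?_⟩
    · calc ‖R' - R₀‖ ≤ 2 * ‖(δ / 2) • G‖ := by simpa using hR'
        _ ≤ δ := by rw [norm_smul, Real.norm_of_nonneg (by positivity)]; nlinarith
    · simp only [hR'Q, ContinuousMap.add_apply, ContinuousMap.smul_apply, smul_eq_mul]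
      exact setOf_forall_add_le_add_eq_singleton ha₂ fun b hb =>
        mul_lt_mul_of_pos_left (hGpeak s₀ b hb) (by positivity)
  refine ⟨hperturb, fun pol hsel hpol hpol_cont => ?_⟩
  refine not_continuousAt_of_frequently_eq (f := fun R => pol R s₀) (hpol.trans_ne hne) ?_
    ((continuous_apply s₀).continuousAt.comp hpol_cont)
  refine Metric.nhds_basis_closedBall.frequently_iff.mpr fun δ hδ => ?_
  obtain ⟨R', hR'δ, hR'argmax⟩ := hperturb δ hδ
  exact ⟨R', by rwa [Metric.mem_closedBall, dist_eq_norm],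
    by simpa [hR'argmax] using hsel R' s₀⟩

/-- Discontinuity under non-uniqueness (constructive core): if
`A*(s₀;R₀)` is finite with at least two distinct elements `a₁ ≠ a₂`, then for every
`δ > 0` there is `R'` with `‖R' - R₀‖ ≤ δ` and `A*(s₀;R') = {a₂}`. Consequently any
policy selection map `R ↦ π_R` with `π_R(s) ∈ A*(s;R)` for all `s` and
`π_{R₀}(s₀) = a₁` is discontinuous at `R₀` in the topology of pointwise convergence
of policies. Here `Qstar R` denotes the (unique) Bellman fixed point for reward `R`. -/
theorem policy_discontinuity_under_nonuniqueness
    {S A : Type*}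
    [MetricSpace S] [CompactSpace S] [MeasurableSpace S] [BorelSpace S]
    [MetricSpace A] [CompactSpace A] [Nonempty A] [MeasurableSpace A] [BorelSpace A]
    (γ : ℝ) (hγ0 : 0 ≤ γ) (hγ1 : γ < 1)
    (P : Kernel (S × A) S) [IsMarkovKernel P]
    (hFeller : ∀ f : C(S, ℝ), Continuous fun p : S × A => ∫ s', f s' ∂(P p))
    (Qstar : C(S × A, ℝ) → C(S × A, ℝ))
    (hQstar : ∀ (R : C(S × A, ℝ)) (p : S × A),
      Qstar R p = R p + γ * ∫ s', (⨆ a' : A, Qstar R (s', a')) ∂(P p))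
    (R₀ : C(S × A, ℝ)) (s₀ : S)
    (hfin : {a : A | ∀ b : A, Qstar R₀ (s₀, b) ≤ Qstar R₀ (s₀, a)}.Finite)
    (a₁ a₂ : A)
    (ha₁ : a₁ ∈ {a : A | ∀ b : A, Qstar R₀ (s₀, b) ≤ Qstar R₀ (s₀, a)})
    (ha₂ : a₂ ∈ {a : A | ∀ b : A, Qstar R₀ (s₀, b) ≤ Qstar R₀ (s₀, a)})
    (hne : a₁ ≠ a₂) :
    (∀ δ > (0 : ℝ), ∃ R' : C(S × A, ℝ), ‖R' - R₀‖ ≤ δ ∧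
      {a : A | ∀ b : A, Qstar R' (s₀, b) ≤ Qstar R' (s₀, a)} = {a₂}) ∧
    (∀ pol : C(S × A, ℝ) → S → A,
      (∀ (R : C(S × A, ℝ)) (s : S),
        pol R s ∈ {a : A | ∀ b : A, Qstar R (s, b) ≤ Qstar R (s, a)}) →
      pol R₀ s₀ = a₁ → ¬ ContinuousAt pol R₀) :=
  policy_discontinuity_under_nonuniqueness_general γ hγ0 hγ1 P hFeller Qstar hQstar R₀ s₀ a₁ a₂ ha₂
    hne
end

section
/- Suboptimality from incomplete rewards (policy-improvement core): let R_train, R_missing ∈ C(S×A) and set R_true = R_train + R_missing. Let π be a policy such that V^π_{R_train}(s) = max_{a∈A} Q*_{R_train}(s,a) for all s ∈ S (so π is optimal for R_train). Suppose there exist s₀ ∈ S and a₂ ∈ A such that (i) a₂ ∈ argmax_{a∈A} Q*_{R_train}(s₀,a), and (ii) Q^π_{R_missing}(s₀,a₂) > V^π_{R_missing}(s₀). Then Q^π_{R_true}(s₀,a₂) > V^π_{R_true}(s₀); in particular π is not an optimal policy for R_true. -/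
/-!
Policy evaluation is affine in the reward and, for `|γ| < 1`, a contraction in the sup norm, so
its fixed points add: `V^π_{R_train + R_missing} = V^π_{R_train} + V^π_{R_missing}`, and likewise
for the action values. Since `π` is optimal for `R_train`, `Q^π_{R_train} = Q*_{R_train}`, whose
value at `(s₀, a₂)` is the maximum `V^π_{R_train}(s₀)`; adding the strict advantage of `a₂` for
`R_missing` gives a strict advantage for `R_true`. An optimal policy for `R_true` has no action
with positive advantage, so `π` is not optimal for `R_true`.
-/

open MeasureTheory ProbabilityTheory Filter Topology

section PolicyEvaluation

variable {S A : Type*} [MeasurableSpace S] [MeasurableSpace A]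

/-- `Q^π_R` is `actionValue P γ R V^π_R`. -/
noncomputable def actionValue (P : Kernel (S × A) S) (γ : ℝ) (R : S × A → ℝ) (V : S → ℝ)
    (p : S × A) : ℝ :=
  R p + γ * ∫ s', V s' ∂(P p)

/-- `T^π_R V`. -/
noncomputable def policyEval (P : Kernel (S × A) S) (pol : Kernel S A) (γ : ℝ) (R : S × A → ℝ)
    (V : S → ℝ) (s : S) : ℝ :=
  ∫ a, actionValue P γ R V (s, a) ∂(pol s)

theorem eq_actionValue_of_forall_eq_iSup {P : Kernel (S × A) S} {γ : ℝ} {R Q : S × A → ℝ}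
    {V : S → ℝ} (hQ : ∀ p, Q p = R p + γ * ∫ s', (⨆ a', Q (s', a')) ∂(P p))
    (hV : ∀ s, V s = ⨆ a, Q (s, a)) (p : S × A) :
    Q p = actionValue P γ R V p := by
  rw [hQ p, actionValue]
  simp only [hV]

variable [TopologicalSpace S] [CompactSpace S] (P : Kernel (S × A) S) [IsMarkovKernel P] (γ : ℝ)

theorem norm_integral_kernel_le (V : C(S, ℝ)) (p : S × A) : ‖∫ s', V s' ∂(P p)‖ ≤ ‖V‖ := by
  simpa using norm_integral_le_of_norm_le_const (μ := P p) (.of_forall V.norm_coe_le_norm)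

variable [OpensMeasurableSpace S]

theorem ContinuousMap.integrable_of_compactSpace (V : C(S, ℝ)) (μ : Measure S)
    [IsFiniteMeasure μ] : Integrable V μ :=
  V.continuous.integrable_of_hasCompactSupport (.of_compactSpace V)

theorem integrable_integral_kernel (V : C(S, ℝ)) (s : S) (μ : Measure A) [IsFiniteMeasure μ] :
    Integrable (fun a => ∫ s', V s' ∂(P (s, a))) μ := by
  refine .of_bound ?_ ‖V‖ (.of_forall fun a => norm_integral_kernel_le P V (s, a))
  exact ((V.continuous.measurable.stronglyMeasurable.integral_kernel (κ := P)).comp_measurable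
    measurable_prodMk_left).aestronglyMeasurable

theorem actionValue_add (R₁ R₂ : S × A → ℝ) (V₁ V₂ : C(S, ℝ)) (p : S × A) :
    actionValue P γ (R₁ + R₂) ⇑(V₁ + V₂) p = actionValue P γ R₁ V₁ p + actionValue P γ R₂ V₂ p := by
  simp only [actionValue, Pi.add_apply, ContinuousMap.coe_add]
  rw [integral_add (V₁.integrable_of_compactSpace _) (V₂.integrable_of_compactSpace _)]
  ring

theorem actionValue_sub (R : S × A → ℝ) (V W : C(S, ℝ)) (p : S × A) :
    actionValue P γ R V p - actionValue P γ R W p = γ * ∫ s', (V - W) s' ∂(P p) := by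
  simp only [actionValue, ContinuousMap.coe_sub, Pi.sub_apply]
  rw [integral_sub (V.integrable_of_compactSpace _) (W.integrable_of_compactSpace _)]
  ring

variable [TopologicalSpace A] [CompactSpace A] [OpensMeasurableSpace A]
  (pol : Kernel S A) [IsMarkovKernel pol]

theorem integrable_actionValue (R : C(S × A, ℝ)) (V : C(S, ℝ)) (s : S) (μ : Measure A)
    [IsFiniteMeasure μ] : Integrable (fun a => actionValue P γ R V (s, a)) μ :=
  ((R.curry s).integrable_of_compactSpace μ).add
    ((integrable_integral_kernel P V s μ).const_mul γ)

theorem policyEval_add (R₁ R₂ : C(S × A, ℝ)) (V₁ V₂ : C(S, ℝ)) (s : S) :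
    policyEval P pol γ ⇑(R₁ + R₂) ⇑(V₁ + V₂) s =
      policyEval P pol γ R₁ V₁ s + policyEval P pol γ R₂ V₂ s := by
  simp only [policyEval, ContinuousMap.coe_add R₁ R₂, actionValue_add]
  exact integral_add (integrable_actionValue P γ R₁ V₁ s (pol s))
    (integrable_actionValue P γ R₂ V₂ s (pol s))

theorem abs_policyEval_sub_le (R : C(S × A, ℝ)) (V W : C(S, ℝ)) (s : S) :
    |policyEval P pol γ R V s - policyEval P pol γ R W s| ≤ |γ| * ‖V - W‖ := by
  rw [policyEval, policyEval, ← integral_sub (integrable_actionValue P γ R V s _)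
    (integrable_actionValue P γ R W s _)]
  simp only [actionValue_sub, ← Real.norm_eq_abs]
  have hbound (a : A) : ‖γ * ∫ s', (V - W) s' ∂(P (s, a))‖ ≤ |γ| * ‖V - W‖ := by
    rw [norm_mul, Real.norm_eq_abs]
    exact mul_le_mul_of_nonneg_left (norm_integral_kernel_le P (V - W) (s, a)) (abs_nonneg γ)
  simpa using norm_integral_le_of_norm_le_const (μ := pol s) (.of_forall hbound)

theorem eq_of_forall_eq_policyEval {γ : ℝ} (hγ : |γ| < 1) {R : C(S × A, ℝ)} {V W : C(S, ℝ)}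
    (hV : ∀ s, V s = policyEval P pol γ R V s) (hW : ∀ s, W s = policyEval P pol γ R W s) :
    V = W := by
  have hle : ‖V - W‖ ≤ |γ| * ‖V - W‖ := by
    refine (ContinuousMap.norm_le _ (by positivity)).mpr fun s => ?_
    simpa [hV s, hW s] using abs_policyEval_sub_le P γ pol R V W s
  have hzero : ‖V - W‖ = 0 := by nlinarith [norm_nonneg (V - W), abs_nonneg γ]
  exact sub_eq_zero.mp (norm_eq_zero.mp hzero)

end PolicyEvaluation

theorem suboptimality_from_incomplete_rewards_general
    {S A : Type*}
    [MetricSpace S] [CompactSpace S] [MeasurableSpace S] [BorelSpace S]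
    [MetricSpace A] [CompactSpace A] [Nonempty A] [MeasurableSpace A] [BorelSpace A]
    (γ : ℝ) (hγ0 : 0 ≤ γ) (hγ1 : γ < 1)
    (P : Kernel (S × A) S) [IsMarkovKernel P]
    (pol : Kernel S A) [IsMarkovKernel pol]
    (Rtrain Rmiss : C(S × A, ℝ))
    -- optimal Q-function for the training reward
    (Qstar : C(S × A, ℝ))
    (hQstar : ∀ p : S × A,
      Qstar p = Rtrain p + γ * ∫ s', (⨆ a' : A, Qstar (s', a')) ∂(P p))
    -- policy evaluation value functions of `pol` under the three rewards
    (Vtrain Vmiss Vtrue : C(S, ℝ))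
    (hVtrain : ∀ s : S, Vtrain s =
      ∫ a, (Rtrain (s, a) + γ * ∫ s', Vtrain s' ∂(P (s, a))) ∂(pol s))
    (hVmiss : ∀ s : S, Vmiss s =
      ∫ a, (Rmiss (s, a) + γ * ∫ s', Vmiss s' ∂(P (s, a))) ∂(pol s))
    (hVtrue : ∀ s : S, Vtrue s =
      ∫ a, ((Rtrain (s, a) + Rmiss (s, a)) + γ * ∫ s', Vtrue s' ∂(P (s, a))) ∂(pol s))
    -- `pol` is optimal for the training reward
    (hopt : ∀ s : S, Vtrain s = ⨆ a : A, Qstar (s, a))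
    -- action-value functions of `pol` under the missing and true rewards
    (Qmiss Qtrue : S × A → ℝ)
    (hQmiss : ∀ p : S × A, Qmiss p = Rmiss p + γ * ∫ s', Vmiss s' ∂(P p))
    (hQtrue : ∀ p : S × A, Qtrue p = (Rtrain p + Rmiss p) + γ * ∫ s', Vtrue s' ∂(P p))
    (s₀ : S) (a₂ : A)
    -- (i) `a₂` is optimal under the training reward
    (ha₂ : ∀ b : A, Qstar (s₀, b) ≤ Qstar (s₀, a₂))
    -- (ii) positive advantage for the missing reward
    (hadv : Vmiss s₀ < Qmiss (s₀, a₂))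
    -- optimal Q-function for the true reward
    (QstarTrue : C(S × A, ℝ))
    (hQstarTrue : ∀ p : S × A,
      QstarTrue p = (Rtrain p + Rmiss p) + γ * ∫ s', (⨆ a' : A, QstarTrue (s', a')) ∂(P p)) :
    Vtrue s₀ < Qtrue (s₀, a₂) ∧ ¬ (∀ s : S, Vtrue s = ⨆ a : A, QstarTrue (s, a)) := by
  have hγ : |γ| < 1 := abs_lt.mpr ⟨by linarith, hγ1⟩
  have hVtrue_eq : Vtrue = Vtrain + Vmiss :=
    eq_of_forall_eq_policyEval P pol hγ (R := Rtrain + Rmiss) hVtrue fun s => by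
      rw [policyEval_add, ContinuousMap.add_apply, hVtrain, hVmiss]; rfl
  have hQtrue_eq (p : S × A) : Qtrue p = Qstar p + Qmiss p := by
    rw [hQtrue, hVtrue_eq, eq_actionValue_of_forall_eq_iSup hQstar hopt, hQmiss]
    exact actionValue_add P γ Rtrain Rmiss Vtrain Vmiss p
  have hVtrain_le : Vtrain s₀ ≤ Qstar (s₀, a₂) := hopt s₀ ▸ ciSup_le ha₂
  have hadv_true : Vtrue s₀ < Qtrue (s₀, a₂) := by
    rw [hVtrue_eq, ContinuousMap.add_apply, hQtrue_eq]
    linarith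
  refine ⟨hadv_true, fun hoptTrue => hadv_true.not_ge ?_⟩
  have hQtrue_opt : Qtrue (s₀, a₂) = QstarTrue (s₀, a₂) :=
    (hQtrue _).trans (eq_actionValue_of_forall_eq_iSup hQstarTrue hoptTrue _).symm
  rw [hQtrue_opt, hoptTrue]
  exact le_ciSup (isCompact_range (QstarTrue.continuous.comp (.prodMk_right s₀))).bddAbove a₂

/-- Suboptimality from incomplete rewards (policy-improvement core):
with `R_true = R_train + R_missing`, if the policy `pol` is optimal for `R_train`
(i.e. `V^π_{R_train}(s) = max_a Q*_{R_train}(s,a)` for all `s`), `a₂` maximizes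
`Q*_{R_train}(s₀,·)`, and `Q^π_{R_missing}(s₀,a₂) > V^π_{R_missing}(s₀)`, then
`Q^π_{R_true}(s₀,a₂) > V^π_{R_true}(s₀)`; in particular `pol` is not optimal for
`R_true`. -/
theorem suboptimality_from_incomplete_rewards
    {S A : Type*}
    [MetricSpace S] [CompactSpace S] [MeasurableSpace S] [BorelSpace S]
    [MetricSpace A] [CompactSpace A] [Nonempty A] [MeasurableSpace A] [BorelSpace A]
    (γ : ℝ) (hγ0 : 0 ≤ γ) (hγ1 : γ < 1)
    (P : Kernel (S × A) S) [IsMarkovKernel P]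
    (hFeller : ∀ f : C(S, ℝ), Continuous fun p : S × A => ∫ s', f s' ∂(P p))
    (pol : Kernel S A) [IsMarkovKernel pol]
    (hpolFeller : ∀ g : C(A, ℝ), Continuous fun s : S => ∫ a, g a ∂(pol s))
    (Rtrain Rmiss : C(S × A, ℝ))
    -- optimal Q-function for the training reward
    (Qstar : C(S × A, ℝ))
    (hQstar : ∀ p : S × A,
      Qstar p = Rtrain p + γ * ∫ s', (⨆ a' : A, Qstar (s', a')) ∂(P p))
    -- policy evaluation value functions of `pol` under the three rewards
    (Vtrain Vmiss Vtrue : C(S, ℝ))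
    (hVtrain : ∀ s : S, Vtrain s =
      ∫ a, (Rtrain (s, a) + γ * ∫ s', Vtrain s' ∂(P (s, a))) ∂(pol s))
    (hVmiss : ∀ s : S, Vmiss s =
      ∫ a, (Rmiss (s, a) + γ * ∫ s', Vmiss s' ∂(P (s, a))) ∂(pol s))
    (hVtrue : ∀ s : S, Vtrue s =
      ∫ a, ((Rtrain (s, a) + Rmiss (s, a)) + γ * ∫ s', Vtrue s' ∂(P (s, a))) ∂(pol s))
    -- `pol` is optimal for the training reward
    (hopt : ∀ s : S, Vtrain s = ⨆ a : A, Qstar (s, a))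
    -- action-value functions of `pol` under the missing and true rewards
    (Qmiss Qtrue : S × A → ℝ)
    (hQmiss : ∀ p : S × A, Qmiss p = Rmiss p + γ * ∫ s', Vmiss s' ∂(P p))
    (hQtrue : ∀ p : S × A, Qtrue p = (Rtrain p + Rmiss p) + γ * ∫ s', Vtrue s' ∂(P p))
    (s₀ : S) (a₂ : A)
    -- (i) `a₂` is optimal under the training reward
    (ha₂ : ∀ b : A, Qstar (s₀, b) ≤ Qstar (s₀, a₂))
    -- (ii) positive advantage for the missing reward
    (hadv : Vmiss s₀ < Qmiss (s₀, a₂))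
    -- optimal Q-function for the true reward
    (QstarTrue : C(S × A, ℝ))
    (hQstarTrue : ∀ p : S × A,
      QstarTrue p = (Rtrain p + Rmiss p) + γ * ∫ s', (⨆ a' : A, QstarTrue (s', a')) ∂(P p)) :
    Vtrue s₀ < Qtrue (s₀, a₂) ∧ ¬ (∀ s : S, Vtrue s = ⨆ a : A, QstarTrue (s, a)) :=
  suboptimality_from_incomplete_rewards_general γ hγ0 hγ1 P pol Rtrain Rmiss Qstar hQstar Vtrain
    Vmiss Vtrue hVtrain hVmiss hVtrue hopt Qmiss Qtrue hQmiss hQtrue s₀ a₂ ha₂ hadv QstarTrue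
    hQstarTrue
end

section
/- The tie-breaker effect: let R₀ ∈ C(S×A) and suppose for some state s₀ ∈ S there exist two distinct optimal actions a₁, a₂ ∈ A*(s₀;R₀). Then for every ε > 0 there exists R' ∈ C(S×A) with ‖R' − R₀‖∞ ≤ ε and Q*_{R'}(s₀,a₂) > Q*_{R'}(s₀,a₁); that is, a₂ becomes strictly preferred over a₁ under the perturbed reward. -/
/-!
Write `V_Q(s) = max_a Q(s,a)` and let `R_Q := Q - γ P V_Q` be the reward for which `Q` solves the
Bellman equation. Since `Q ↦ V_Q` is 1-Lipschitz for the sup norm, the Bellman operator is a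
`γ`-contraction, so `Q*_{R_Q} = Q`, and `Q ↦ R_Q` is `(1 + γ)`-Lipschitz. Perturbing `Q*_{R₀}` by
`(ε/2) φ`, where `φ` is a Urysohn function vanishing at `(s₀, a₁)` and equal to `1` at `(s₀, a₂)`,
therefore gives a reward `ε`-close to `R₀ = R_{Q*_{R₀}}` whose optimal `Q`-function breaks the tie.
-/

open MeasureTheory ProbabilityTheory

noncomputable section

lemma ciSup_le_ciSup_add {ι : Type*} [Nonempty ι] {f g : ι → ℝ} {c : ℝ}
    (hg : BddAbove (Set.range g)) (h : ∀ i, f i ≤ g i + c) : ⨆ i, f i ≤ (⨆ i, g i) + c :=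
  ciSup_le fun i => (h i).trans (add_le_add_left (le_ciSup hg i) c)

lemma abs_integral_sub_integral_le {X : Type*} [TopologicalSpace X] [CompactSpace X]
    [MeasurableSpace X] [OpensMeasurableSpace X] (μ : Measure X) [IsProbabilityMeasure μ]
    (f g : C(X, ℝ)) : |∫ x, f x ∂μ - ∫ x, g x ∂μ| ≤ ‖f - g‖ := by
  have hint : ∀ h : C(X, ℝ), Integrable h μ := fun h =>
    h.continuous.integrable_of_hasCompactSupport (HasCompactSupport.of_compactSpace _)
  rw [← integral_sub (hint f) (hint g)]
  simpa using norm_integral_le_of_norm_le_const (μ := μ)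
    (ae_of_all _ fun x => (f - g).norm_coe_le_norm x)

section StateValue

variable {S A : Type*} [TopologicalSpace S] [TopologicalSpace A] [CompactSpace A]

def stateValue (Q : C(S × A, ℝ)) : C(S, ℝ) where
  toFun s := ⨆ a, Q (s, a)
  continuous_toFun := by
    simpa only [Set.image_univ, sSup_range] using
      isCompact_univ.continuous_sSup (f := fun s a => Q (s, a)) Q.continuous

@[simp]
lemma stateValue_apply (Q : C(S × A, ℝ)) (s : S) : stateValue Q s = ⨆ a, Q (s, a) := rfl

lemma norm_stateValue_sub_le [CompactSpace S] [Nonempty A] (Q₁ Q₂ : C(S × A, ℝ)) :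
    ‖stateValue Q₁ - stateValue Q₂‖ ≤ ‖Q₁ - Q₂‖ := by
  refine (ContinuousMap.norm_le _ (norm_nonneg _)).2 fun s => ?_
  have hQ : ∀ a, |Q₁ (s, a) - Q₂ (s, a)| ≤ ‖Q₁ - Q₂‖ := fun a =>
    (Q₁ - Q₂).norm_coe_le_norm (s, a)
  have hbdd : ∀ Q : C(S × A, ℝ), BddAbove (Set.range fun a => Q (s, a)) := fun Q =>
    (isCompact_range (Q.continuous.comp (Continuous.prodMk_right s))).bddAbove
  rw [ContinuousMap.sub_apply, Real.norm_eq_abs, abs_sub_le_iff, stateValue_apply,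
    stateValue_apply, sub_le_iff_le_add', sub_le_iff_le_add']
  constructor
  · exact ciSup_le_ciSup_add (hbdd Q₂) fun a => by linarith [(abs_sub_le_iff.1 (hQ a)).1]
  · exact ciSup_le_ciSup_add (hbdd Q₁) fun a => by linarith [(abs_sub_le_iff.1 (hQ a)).2]

end StateValue

section Bellman

variable {S A : Type*} [TopologicalSpace S] [MeasurableSpace S] [TopologicalSpace A]
  [CompactSpace A] [MeasurableSpace A] {γ : ℝ} {P : Kernel (S × A) S}

variable (γ P) in
def IsBellmanFixedPoint (R Q : C(S × A, ℝ)) : Prop :=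
  ∀ p, Q p = R p + γ * ∫ s', stateValue Q s' ∂(P p)

variable (γ P) in
def inverseBellman (hFeller : ∀ f : C(S, ℝ), Continuous fun p : S × A => ∫ s', f s' ∂(P p))
    (Q : C(S × A, ℝ)) : C(S × A, ℝ) where
  toFun p := Q p - γ * ∫ s', stateValue Q s' ∂(P p)
  continuous_toFun := Q.continuous.sub (continuous_const.mul (hFeller _))

variable {hFeller : ∀ f : C(S, ℝ), Continuous fun p : S × A => ∫ s', f s' ∂(P p)}

lemma isBellmanFixedPoint_inverseBellman (Q : C(S × A, ℝ)) :
    IsBellmanFixedPoint γ P (inverseBellman γ P hFeller Q) Q := fun _ =>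
  (sub_add_cancel _ _).symm

lemma IsBellmanFixedPoint.inverseBellman_eq {R Q : C(S × A, ℝ)}
    (h : IsBellmanFixedPoint γ P R Q) : inverseBellman γ P hFeller Q = R := by
  ext p
  exact sub_eq_of_eq_add (h p)

variable [CompactSpace S] [OpensMeasurableSpace S] [Nonempty A] [IsMarkovKernel P]

lemma abs_integral_stateValue_sub_le (Q₁ Q₂ : C(S × A, ℝ)) (p : S × A) :
    |∫ s', stateValue Q₁ s' ∂(P p) - ∫ s', stateValue Q₂ s' ∂(P p)| ≤ ‖Q₁ - Q₂‖ :=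
  (abs_integral_sub_integral_le (P p) _ _).trans (norm_stateValue_sub_le Q₁ Q₂)

lemma IsBellmanFixedPoint.eq (hγ0 : 0 ≤ γ) (hγ1 : γ < 1) {R Q₁ Q₂ : C(S × A, ℝ)}
    (h₁ : IsBellmanFixedPoint γ P R Q₁) (h₂ : IsBellmanFixedPoint γ P R Q₂) : Q₁ = Q₂ := by
  have hcontract : ‖Q₁ - Q₂‖ ≤ γ * ‖Q₁ - Q₂‖ := by
    refine (ContinuousMap.norm_le _ (by positivity)).2 fun p => ?_
    rw [ContinuousMap.sub_apply, h₁ p, h₂ p, Real.norm_eq_abs, add_sub_add_left_eq_sub,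
      ← mul_sub, abs_mul, abs_of_nonneg hγ0]
    exact mul_le_mul_of_nonneg_left (abs_integral_stateValue_sub_le Q₁ Q₂ p) hγ0
  have : ‖Q₁ - Q₂‖ = 0 := le_antisymm (by nlinarith [norm_nonneg (Q₁ - Q₂)]) (norm_nonneg _)
  exact sub_eq_zero.1 (norm_eq_zero.1 this)

lemma norm_inverseBellman_sub_le (hγ0 : 0 ≤ γ) (Q₁ Q₂ : C(S × A, ℝ)) :
    ‖inverseBellman γ P hFeller Q₁ - inverseBellman γ P hFeller Q₂‖
      ≤ (1 + γ) * ‖Q₁ - Q₂‖ := by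
  refine (ContinuousMap.norm_le _ (by positivity)).2 fun p => ?_
  have hQ : |Q₁ p - Q₂ p| ≤ ‖Q₁ - Q₂‖ := (Q₁ - Q₂).norm_coe_le_norm p
  have hV : |γ * (∫ s', stateValue Q₁ s' ∂(P p) - ∫ s', stateValue Q₂ s' ∂(P p))|
      ≤ γ * ‖Q₁ - Q₂‖ := by
    rw [abs_mul, abs_of_nonneg hγ0]
    exact mul_le_mul_of_nonneg_left (abs_integral_stateValue_sub_le Q₁ Q₂ p) hγ0
  calc ‖(inverseBellman γ P hFeller Q₁ - inverseBellman γ P hFeller Q₂) p‖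
      = |(Q₁ p - Q₂ p)
          - γ * (∫ s', stateValue Q₁ s' ∂(P p) - ∫ s', stateValue Q₂ s' ∂(P p))| := by
        rw [Real.norm_eq_abs]
        congr 1
        simp only [ContinuousMap.sub_apply, inverseBellman, ContinuousMap.coe_mk]
        ring
    _ ≤ ‖Q₁ - Q₂‖ + γ * ‖Q₁ - Q₂‖ := (abs_sub _ _).trans (add_le_add hQ hV)
    _ = (1 + γ) * ‖Q₁ - Q₂‖ := by ring

end Bellman

end

theorem tie_breaker_effect_general
    {S A : Type*}
    [MetricSpace S] [CompactSpace S] [MeasurableSpace S] [BorelSpace S]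
    [MetricSpace A] [CompactSpace A] [MeasurableSpace A]
    (γ : ℝ) (hγ0 : 0 ≤ γ) (hγ1 : γ < 1)
    (P : Kernel (S × A) S) [IsMarkovKernel P]
    (hFeller : ∀ f : C(S, ℝ), Continuous fun p : S × A => ∫ s', f s' ∂(P p))
    (Qstar : C(S × A, ℝ) → C(S × A, ℝ))
    (hQstar : ∀ (R : C(S × A, ℝ)) (p : S × A),
      Qstar R p = R p + γ * ∫ s', (⨆ a' : A, Qstar R (s', a')) ∂(P p))
    (R₀ : C(S × A, ℝ)) (s₀ : S) (a₁ a₂ : A) (hne : a₁ ≠ a₂)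
    (ha₂ : ∀ b : A, Qstar R₀ (s₀, b) ≤ Qstar R₀ (s₀, a₂)) :
    ∀ ε > (0 : ℝ), ∃ R' : C(S × A, ℝ),
      ‖R' - R₀‖ ≤ ε ∧ Qstar R' (s₀, a₁) < Qstar R' (s₀, a₂) := by
  intro ε hε
  have : Nonempty A := ⟨a₁⟩
  have hQstar_fixed : ∀ R, IsBellmanFixedPoint γ P R (Qstar R) := hQstar
  obtain ⟨φ, hφ₁, hφ₂, hφ_mem⟩ := exists_continuous_zero_one_of_isClosed
    (isClosed_singleton (x := (s₀, a₁))) (isClosed_singleton (x := (s₀, a₂)))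
    (Set.disjoint_singleton.2 (by simpa using hne))
  have hφ_norm : ‖φ‖ ≤ 1 := (ContinuousMap.norm_le _ zero_le_one).2 fun p => by
    rw [Real.norm_eq_abs, abs_of_nonneg (hφ_mem p).1]
    exact (hφ_mem p).2
  set Q' := Qstar R₀ + (ε / 2) • φ
  refine ⟨inverseBellman γ P hFeller Q', ?_, ?_⟩
  · rw [← (hQstar_fixed R₀).inverseBellman_eq (hFeller := hFeller)]
    calc _ ≤ (1 + γ) * ‖Q' - Qstar R₀‖ := norm_inverseBellman_sub_le hγ0 _ _
      _ ≤ 2 * (ε / 2 * 1) := by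
        rw [add_sub_cancel_left, norm_smul, Real.norm_of_nonneg (by positivity)]
        gcongr
        linarith
      _ = ε := by ring
  · rw [(hQstar_fixed _).eq hγ0 hγ1 (isBellmanFixedPoint_inverseBellman Q')]
    simp only [Q', ContinuousMap.add_apply, ContinuousMap.smul_apply, hφ₁ rfl, hφ₂ rfl,
      Pi.zero_apply, Pi.one_apply, smul_eq_mul]
    linarith [ha₂ a₁]

/-- The tie-breaker effect: if `a₁ ≠ a₂` are two optimal actions in
`A*(s₀;R₀)`, then for every `ε > 0` there is `R'` with `‖R' - R₀‖ ≤ ε` and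
`Q*_{R'}(s₀,a₂) > Q*_{R'}(s₀,a₁)`. Here `Qstar R` denotes the unique Bellman fixed
point for reward `R`. -/
theorem tie_breaker_effect
    {S A : Type*}
    [MetricSpace S] [CompactSpace S] [MeasurableSpace S] [BorelSpace S]
    [MetricSpace A] [CompactSpace A] [Nonempty A] [MeasurableSpace A] [BorelSpace A]
    (γ : ℝ) (hγ0 : 0 ≤ γ) (hγ1 : γ < 1)
    (P : Kernel (S × A) S) [IsMarkovKernel P]
    (hFeller : ∀ f : C(S, ℝ), Continuous fun p : S × A => ∫ s', f s' ∂(P p))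
    (Qstar : C(S × A, ℝ) → C(S × A, ℝ))
    (hQstar : ∀ (R : C(S × A, ℝ)) (p : S × A),
      Qstar R p = R p + γ * ∫ s', (⨆ a' : A, Qstar R (s', a')) ∂(P p))
    (R₀ : C(S × A, ℝ)) (s₀ : S) (a₁ a₂ : A) (hne : a₁ ≠ a₂)
    (ha₁ : ∀ b : A, Qstar R₀ (s₀, b) ≤ Qstar R₀ (s₀, a₁))
    (ha₂ : ∀ b : A, Qstar R₀ (s₀, b) ≤ Qstar R₀ (s₀, a₂)) :
    ∀ ε > (0 : ℝ), ∃ R' : C(S × A, ℝ),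
      ‖R' - R₀‖ ≤ ε ∧ Qstar R' (s₀, a₁) < Qstar R' (s₀, a₂) :=
  tie_breaker_effect_general γ hγ0 hγ1 P hFeller Qstar hQstar R₀ s₀ a₁ a₂ hne ha₂
end

section
/- Lipschitz continuity of the soft optimal policy: let A be a nonempty finite set, α > 0, and let w₁,…,w_N : S → [0,1] be continuous with Σ_{k=1}^N w_k(s) = 1 for all s ∈ S. For a tuple R = (R₁,…,R_N) of functions in C(S×A), let Q*_{eff,α}(·,·;R) be the unique fixed point of the soft Bellman operator (T Q)(s,a) = Σ_k w_k(s)R_k(s,a) + γ ∫ α log Σ_{a'∈A} exp(Q(s',a')/α) P(ds'|s,a), and define the softmax policy π*_{R,α}(a|s) = exp(Q*_{eff,α}(s,a;R)/α) / Σ_{b∈A} exp(Q*_{eff,α}(s,b;R)/α). Then for any two tuples R₁, R₂ and every s ∈ S, d_TV(π*_{R₁,α}(·|s), π*_{R₂,α}(·|s)) ≤ (1/(2α(1−γ))) · max_{1≤k≤N} ‖R₁,k − R₂,k‖∞. -/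
open MeasureTheory ProbabilityTheory Filter Topology

open Real
lemma tanh_bound {δ : ℝ} (hδ : 0 ≤ δ) : (Real.exp δ - 1) / (Real.exp δ + 1) ≤ δ / 2 := by
  have hpos : (0:ℝ) < Real.exp δ + 1 := by positivity
  rw [div_le_div_iff₀ hpos (by norm_num)]
  have key : ∀ x : ℝ, 0 ≤ x → 0 ≤ x * (Real.exp x + 1) - 2 * (Real.exp x - 1) := by
    intro x hx
    have hmono : MonotoneOn (fun y : ℝ => y * (Real.exp y + 1) - 2 * (Real.exp y - 1)) (Set.Ici 0) := by
      apply monotoneOn_of_deriv_nonneg (convex_Ici 0)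
      · fun_prop
      · fun_prop
      · intro y hy
        have hd : HasDerivAt (fun y : ℝ => y * (Real.exp y + 1) - 2 * (Real.exp y - 1))
            ((Real.exp y + 1) + y * Real.exp y - 2 * Real.exp y) y := by
          have h1 : HasDerivAt (fun y : ℝ => y * (Real.exp y + 1))
              (1 * (Real.exp y + 1) + y * Real.exp y) y :=
            (hasDerivAt_id y).mul ((Real.hasDerivAt_exp y).add_const 1)
          have h2 : HasDerivAt (fun y : ℝ => 2 * (Real.exp y - 1)) (2 * Real.exp y) y :=
            ((Real.hasDerivAt_exp y).sub_const 1).const_mul 2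
          exact (h1.sub h2).congr_deriv (by ring)
        rw [hd.deriv]
        have h0 : -y + 1 ≤ Real.exp (-y) := Real.add_one_le_exp (-y)
        have h3 : (1 - y) * Real.exp y ≤ 1 := by
          have := mul_le_mul_of_nonneg_right h0 (Real.exp_pos y).le
          rwa [← Real.exp_add, neg_add_cancel, Real.exp_zero, show -y + 1 = 1 - y by ring] at this
        nlinarith
    have := hmono (Set.self_mem_Ici) (Set.mem_Ici.2 hx) hx
    simpa using this
  nlinarith [key δ hδ]
lemma poly_key {a b c d E : ℝ} (ha : 0 ≤ a) (hb : 0 ≤ b) (hc : 0 ≤ c) (hd : 0 ≤ d)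
    (hE : 1 ≤ E) (hab : a ≤ E * b) (hdc : d ≤ E * c) :
    2 * (a * d) ≤ (E - 1) * (a * b + c * d) + 2 * E * (b * c) := by
  rcases le_or_gt (a * d) (E * (b * c)) with h | h
  · nlinarith [mul_nonneg (mul_nonneg ha hb) hc, mul_nonneg ha hb, mul_nonneg hc hd]
  · -- a*d > E*b*c ≥ b*c; also a*d ≤ E^2*(b*c)
    have h1 : a * d ≤ E ^ 2 * (b * c) := by nlinarith [mul_nonneg ha hc, mul_nonneg hd hb]
    have h2 : b * c ≤ a * d := by nlinarith [mul_nonneg hb hc]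
    have h3 : (a * d - b * c) * (E ^ 2 * (b * c) - a * d) ≥ 0 :=
      mul_nonneg (by linarith) (by linarith)
    -- (E-1)^2 * (ad)(bc) ≥ (ad - E bc)^2
    have h4 : (a * d - E * (b * c)) ^ 2 ≤ (E - 1) ^ 2 * ((a * d) * (b * c)) := by nlinarith [h3]
    -- (ab + cd)^2 ≥ 4 (ab)(cd) = 4 (ad)(bc)
    have h5 : 4 * ((a * d) * (b * c)) ≤ (a * b + c * d) ^ 2 := by nlinarith [sq_nonneg (a * b - c * d)]
    have h6 : 0 ≤ (E - 1) * (a * b + c * d) := mul_nonneg (by linarith) (add_nonneg (mul_nonneg ha hb) (mul_nonneg hc hd))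
    -- combine: ((E-1)(ab+cd))^2 ≥ 4 (ad - E bc)^2, both bases nonneg
    nlinarith [sq_nonneg ((E - 1) * (a * b + c * d) + 2 * (a * d - E * (b * c))), sq_nonneg (E-1), mul_nonneg (mul_nonneg ha hd) (mul_nonneg hb hc)]
lemma softmax_tv {A : Type*} [Fintype A] [Nonempty A] (u v : A → ℝ) {δ : ℝ} (hδ : 0 ≤ δ)
    (h : ∀ a, |u a - v a| ≤ δ) :
    ∑ a : A, |Real.exp (u a) / (∑ b : A, Real.exp (u b)) -
      Real.exp (v a) / (∑ b : A, Real.exp (v b))| ≤ δ := by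
  set U : ℝ := ∑ b : A, Real.exp (u b) with hUdef
  set V : ℝ := ∑ b : A, Real.exp (v b) with hVdef
  have hU : 0 < U := Finset.sum_pos (fun a _ => Real.exp_pos _) Finset.univ_nonempty
  have hV : 0 < V := Finset.sum_pos (fun a _ => Real.exp_pos _) Finset.univ_nonempty
  set t : A → ℝ := fun a => Real.exp (u a) / U - Real.exp (v a) / V with htdef
  have hsum0 : ∑ a : A, t a = 0 := by
    simp only [htdef, Finset.sum_sub_distrib, ← Finset.sum_div]
    rw [div_self hU.ne', div_self hV.ne', sub_self]
  set B : Finset A := Finset.univ.filter (fun a => 0 ≤ t a) with hBdef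
  have hsplit : ∀ f : A → ℝ, (∑ a ∈ B, f a) + (∑ a ∈ Finset.univ.filter (fun a => ¬ (0 ≤ t a)), f a) = ∑ a : A, f a := by
    intro f; exact Finset.sum_filter_add_sum_filter_not _ _ f
  have habs : ∑ a : A, |t a| = 2 * ∑ a ∈ B, t a := by
    have h1 : ∑ a ∈ B, |t a| = ∑ a ∈ B, t a :=
      Finset.sum_congr rfl (fun a ha => abs_of_nonneg (Finset.mem_filter.1 ha).2)
    have h2 : ∑ a ∈ Finset.univ.filter (fun a => ¬ (0 ≤ t a)), |t a| =
        ∑ a ∈ Finset.univ.filter (fun a => ¬ (0 ≤ t a)), (- t a) :=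
      Finset.sum_congr rfl (fun a ha => abs_of_neg (lt_of_not_ge (Finset.mem_filter.1 ha).2))
    have h3 := hsplit (fun a => |t a|)
    have h4 := hsplit t
    rw [h1, h2] at h3
    rw [Finset.sum_neg_distrib] at h3
    linarith [hsum0 ▸ h4, h3]
  set E : ℝ := Real.exp δ with hEdef
  have hE1 : 1 ≤ E := Real.one_le_exp hδ
  set x : ℝ := ∑ a ∈ B, Real.exp (u a) with hxdef
  set y : ℝ := ∑ a ∈ B, Real.exp (v a) with hydef
  set x' : ℝ := ∑ a ∈ Finset.univ.filter (fun a => ¬ (0 ≤ t a)), Real.exp (u a) with hx'def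
  set y' : ℝ := ∑ a ∈ Finset.univ.filter (fun a => ¬ (0 ≤ t a)), Real.exp (v a) with hy'def
  have hxy : x ≤ E * y := by
    rw [Finset.mul_sum]
    refine Finset.sum_le_sum fun a _ => ?_
    rw [← Real.exp_add]
    exact Real.exp_le_exp.2 (by have := abs_le.1 (h a); linarith)
  have hy'x' : y' ≤ E * x' := by
    rw [Finset.mul_sum]
    refine Finset.sum_le_sum fun a _ => ?_
    rw [← Real.exp_add]
    exact Real.exp_le_exp.2 (by have := abs_le.1 (h a); linarith)
  have hx0 : 0 ≤ x := Finset.sum_nonneg fun a _ => (Real.exp_pos _).le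
  have hy0 : 0 ≤ y := Finset.sum_nonneg fun a _ => (Real.exp_pos _).le
  have hx'0 : 0 ≤ x' := Finset.sum_nonneg fun a _ => (Real.exp_pos _).le
  have hy'0 : 0 ≤ y' := Finset.sum_nonneg fun a _ => (Real.exp_pos _).le
  have hUxx : U = x + x' := (hsplit (fun a => Real.exp (u a))).symm
  have hVyy : V = y + y' := (hsplit (fun a => Real.exp (v a))).symm
  have hBt : ∑ a ∈ B, t a = x / U - y / V := by
    simp only [htdef, Finset.sum_sub_distrib, ← Finset.sum_div]
    rfl
  have hpoly := poly_key hx0 hy0 hx'0 hy'0 hE1 hxy hy'x'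
  have hT : x / U - y / V ≤ (E - 1) / (E + 1) := by
    rw [div_sub_div _ _ hU.ne' hV.ne', div_le_div_iff₀ (by positivity) (by positivity)]
    rw [hUxx, hVyy]
    nlinarith [hpoly]
  have htanh := tanh_bound hδ
  rw [habs, hBt]
  linarith
lemma lse_lipschitz {A : Type*} [Fintype A] [Nonempty A] (α : ℝ) (hα : 0 < α)
    (x y : A → ℝ) {D : ℝ} (h : ∀ a, |x a - y a| ≤ D) :
    |α * Real.log (∑ a : A, Real.exp (x a / α)) - α * Real.log (∑ a : A, Real.exp (y a / α))| ≤ D := by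
  have key : ∀ x y : A → ℝ, (∀ a, |x a - y a| ≤ D) →
      α * Real.log (∑ a : A, Real.exp (x a / α)) - α * Real.log (∑ a : A, Real.exp (y a / α)) ≤ D := by
    intro x y h
    have hpos : (0:ℝ) < ∑ a : A, Real.exp (y a / α) := Finset.sum_pos (fun a _ => Real.exp_pos _) Finset.univ_nonempty
    have hle : (∑ a : A, Real.exp (x a / α)) ≤ Real.exp (D / α) * ∑ a : A, Real.exp (y a / α) := by
      rw [Finset.mul_sum]
      refine Finset.sum_le_sum fun a _ => ?_
      rw [← Real.exp_add]
      apply Real.exp_le_exp.2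
      rw [← add_div, div_le_div_iff_of_pos_right hα]
      have := abs_le.1 (h a); linarith
    have hlog := Real.log_le_log (Finset.sum_pos (fun a _ => Real.exp_pos _) Finset.univ_nonempty) hle
    rw [Real.log_mul (Real.exp_ne_zero _) hpos.ne', Real.log_exp] at hlog
    have := mul_le_mul_of_nonneg_left hlog hα.le
    rw [mul_add, mul_div_cancel₀ _ hα.ne'] at this
    linarith
  have h' : ∀ a, |y a - x a| ≤ D := fun a => by rw [abs_sub_comm]; exact h a
  exact abs_sub_le_iff.2 ⟨key x y h, key y x h'⟩

/-- Lipschitz continuity of the soft optimal policy: with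
`Q*_{eff,α}(·,·;R)` the unique fixed point of the soft Bellman operator for the
effective reward `Σ_k w_k(s) R_k(s,a)`, the softmax policies satisfy, for every `s`,
`d_TV(π*_{R₁,α}(·|s), π*_{R₂,α}(·|s)) ≤ (1/(2α(1-γ))) · max_k ‖R₁_k - R₂_k‖`. -/
theorem soft_policy_lipschitz
    {S : Type*} [MetricSpace S] [CompactSpace S] [MeasurableSpace S] [BorelSpace S]
    {A : Type*} [Fintype A] [Nonempty A] [TopologicalSpace A] [DiscreteTopology A]
    [MeasurableSpace A]
    (α : ℝ) (hα : 0 < α)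
    (γ : ℝ) (hγ0 : 0 ≤ γ) (hγ1 : γ < 1)
    (P : Kernel (S × A) S) [IsMarkovKernel P]
    (hFeller : ∀ f : C(S, ℝ), Continuous fun p : S × A => ∫ s', f s' ∂(P p))
    (N : ℕ) (hN : 0 < N)
    (w : Fin N → C(S, ℝ))
    (hw01 : ∀ (k : Fin N) (s : S), w k s ∈ Set.Icc (0 : ℝ) 1)
    (hwsum : ∀ s : S, ∑ k, w k s = 1)
    (R₁ R₂ : Fin N → C(S × A, ℝ))
    (Q₁ Q₂ : C(S × A, ℝ))
    (hQ₁ : ∀ p : S × A, Q₁ p = (∑ k, w k p.1 * R₁ k p) +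
      γ * ∫ s', α * Real.log (∑ a' : A, Real.exp (Q₁ (s', a') / α)) ∂(P p))
    (hQ₂ : ∀ p : S × A, Q₂ p = (∑ k, w k p.1 * R₂ k p) +
      γ * ∫ s', α * Real.log (∑ a' : A, Real.exp (Q₂ (s', a') / α)) ∂(P p)) :
    ∀ s : S,
      (1 / 2 : ℝ) * ∑ a : A,
        |Real.exp (Q₁ (s, a) / α) / (∑ b : A, Real.exp (Q₁ (s, b) / α)) -
          Real.exp (Q₂ (s, a) / α) / (∑ b : A, Real.exp (Q₂ (s, b) / α))|
      ≤ (1 / (2 * α * (1 - γ))) * ⨆ k, ‖R₁ k - R₂ k‖ := by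
  haveI : Nonempty (Fin N) := ⟨⟨0, hN⟩⟩
  set D : ℝ := ‖Q₁ - Q₂‖ with hDdef
  set M : ℝ := ⨆ k, ‖R₁ k - R₂ k‖ with hMdef
  have hD0 : 0 ≤ D := norm_nonneg _
  have hMk : ∀ k, ‖R₁ k - R₂ k‖ ≤ M := fun k =>
    le_ciSup (f := fun k => ‖R₁ k - R₂ k‖) (Set.Finite.bddAbove (Set.finite_range _)) k
  have hM0 : 0 ≤ M := le_trans (norm_nonneg _) (hMk (Classical.arbitrary _))
  -- pointwise bound on |Q₁ p - Q₂ p|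
  have hQpt : ∀ p : S × A, |Q₁ p - Q₂ p| ≤ D := fun p => by
    simpa [Real.norm_eq_abs] using (Q₁ - Q₂).norm_coe_le_norm p
  set L₁ : S → ℝ := fun s' => α * Real.log (∑ a' : A, Real.exp (Q₁ (s', a') / α)) with hL₁def
  set L₂ : S → ℝ := fun s' => α * Real.log (∑ a' : A, Real.exp (Q₂ (s', a') / α)) with hL₂def
  have hLc : ∀ Q : C(S × A, ℝ), Continuous (fun s' => α * Real.log (∑ a' : A, Real.exp (Q (s', a') / α))) := by
    intro Q
    apply continuous_const.mul
    apply Continuous.log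
    · apply continuous_finset_sum
      intro a _
      exact Real.continuous_exp.comp ((Q.continuous.comp (continuous_id.prodMk continuous_const)).div_const α)
    · intro s'
      exact (Finset.sum_pos (fun a _ => Real.exp_pos _) Finset.univ_nonempty).ne'
  have hLpt : ∀ s', |L₁ s' - L₂ s'| ≤ D := fun s' =>
    lse_lipschitz α hα (fun a => Q₁ (s', a)) (fun a => Q₂ (s', a)) (fun a => hQpt (s', a))
  have hint : ∀ p : S × A, |(∫ s', L₁ s' ∂(P p)) - ∫ s', L₂ s' ∂(P p)| ≤ D := by
    intro p
    have hi1 : Integrable L₁ (P p) :=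
      (hLc Q₁).integrable_of_hasCompactSupport (isClosed_tsupport _).isCompact
    have hi2 : Integrable L₂ (P p) :=
      (hLc Q₂).integrable_of_hasCompactSupport (isClosed_tsupport _).isCompact
    rw [← integral_sub hi1 hi2]
    calc |∫ s', (L₁ s' - L₂ s') ∂(P p)| ≤ ∫ s', |L₁ s' - L₂ s'| ∂(P p) := by
          simpa [Real.norm_eq_abs] using
            norm_integral_le_integral_norm (μ := P p) (fun s' => L₁ s' - L₂ s')
      _ ≤ ∫ _s', D ∂(P p) := integral_mono (hi1.sub hi2).abs (integrable_const D) hLpt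
      _ = D := by simp
  have hQD : ∀ p : S × A, |Q₁ p - Q₂ p| ≤ M + γ * D := by
    intro p
    have hsplit : Q₁ p - Q₂ p = (∑ k, w k p.1 * (R₁ k p - R₂ k p)) +
        γ * ((∫ s', L₁ s' ∂(P p)) - ∫ s', L₂ s' ∂(P p)) := by
      rw [hQ₁ p, hQ₂ p]
      simp only [mul_sub, Finset.sum_sub_distrib]
      ring
    rw [hsplit]
    have h1 : |∑ k, w k p.1 * (R₁ k p - R₂ k p)| ≤ M := by
      calc |∑ k, w k p.1 * (R₁ k p - R₂ k p)| ≤ ∑ k, |w k p.1 * (R₁ k p - R₂ k p)| :=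
            Finset.abs_sum_le_sum_abs _ _
        _ ≤ ∑ k, w k p.1 * M := by
            refine Finset.sum_le_sum fun k _ => ?_
            rw [abs_mul, abs_of_nonneg (hw01 k p.1).1]
            refine mul_le_mul_of_nonneg_left ?_ (hw01 k p.1).1
            have : |(R₁ k - R₂ k) p| ≤ ‖R₁ k - R₂ k‖ := by
              simpa [Real.norm_eq_abs] using (R₁ k - R₂ k).norm_coe_le_norm p
            simp only [ContinuousMap.sub_apply] at this
            exact this.trans (hMk k)
        _ = M := by rw [← Finset.sum_mul, hwsum, one_mul]
    have h2 : |γ * ((∫ s', L₁ s' ∂(P p)) - ∫ s', L₂ s' ∂(P p))| ≤ γ * D := by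
      rw [abs_mul, abs_of_nonneg hγ0]
      exact mul_le_mul_of_nonneg_left (hint p) hγ0
    calc |_ + _| ≤ _ := abs_add_le _ _
      _ ≤ M + γ * D := add_le_add h1 h2
  have hDle : D ≤ M + γ * D := by
    rw [hDdef]
    refine (ContinuousMap.norm_le _ (by positivity)).2 fun p => ?_
    simpa [Real.norm_eq_abs] using hQD p
  have hDM : D * (1 - γ) ≤ M := by nlinarith
  intro s
  have htv := softmax_tv (fun a => Q₁ (s, a) / α) (fun a => Q₂ (s, a) / α)
    (δ := D / α) (div_nonneg hD0 hα.le) (fun a => by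
      rw [div_sub_div_same, abs_div, abs_of_pos hα]
      gcongr
      exact hQpt (s, a))
  have hrhs : D / α ≤ M / (α * (1 - γ)) := by
    rw [div_le_div_iff₀ hα (by nlinarith)]
    nlinarith
  calc (1 / 2 : ℝ) * ∑ a : A,
        |Real.exp (Q₁ (s, a) / α) / (∑ b : A, Real.exp (Q₁ (s, b) / α)) -
          Real.exp (Q₂ (s, a) / α) / (∑ b : A, Real.exp (Q₂ (s, b) / α))|
      ≤ (1 / 2 : ℝ) * (D / α) := by
        refine mul_le_mul_of_nonneg_left ?_ (by norm_num)
        exact htv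
    _ ≤ (1 / 2 : ℝ) * (M / (α * (1 - γ))) := mul_le_mul_of_nonneg_left hrhs (by norm_num)
    _ = (1 / (2 * α * (1 - γ))) * M := by
        field_simp
end

section
/- Lipschitz property of the softmax function: let d ≥ 1 and α > 0, and let π : ℝ^d → ℝ^d be the softmax with temperature α, πᵢ(x) = exp(xᵢ/α) / Σ_{j=1}^d exp(x_j/α). Then for any x, y ∈ ℝ^d, ‖π(x) − π(y)‖₁ ≤ (1/α) ‖x − y‖∞, i.e., Σ_{i=1}^d |πᵢ(x) − πᵢ(y)| ≤ (1/α) · max_{1≤j≤d} |x_j − y_j|. -/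
open Finset
open scoped ENNReal

private lemma mad_le {d : ℕ} (p v : Fin d → ℝ) (hp : ∀ i, 0 ≤ p i)
    (hsum : ∑ i, p i = 1) (K : ℝ) (hK : 0 ≤ K) (hv : ∀ i, |v i| ≤ K) :
    ∑ i, p i * |v i - ∑ j, p j * v j| ≤ K := by
  set μ := ∑ j, p j * v j with hμdef
  have hμK : |μ| ≤ K := by
    calc |μ| ≤ ∑ j, |p j * v j| := Finset.abs_sum_le_sum_abs _ _
    _ ≤ ∑ j, p j * K := by
        refine Finset.sum_le_sum fun j _ => ?_
        rw [abs_mul, abs_of_nonneg (hp j)]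
        exact mul_le_mul_of_nonneg_left (hv j) (hp j)
    _ = K := by rw [← Finset.sum_mul, hsum, one_mul]
  set q : Fin d → Prop := fun i => μ ≤ v i with hq
  classical
  set P := ∑ i ∈ univ.filter q, p i with hP
  have hP0 : 0 ≤ P := Finset.sum_nonneg fun i _ => hp i
  have hP1 : P ≤ 1 := by
    rw [← hsum]
    exact Finset.sum_le_sum_of_subset_of_nonneg (Finset.filter_subset _ _)
      (fun i _ _ => hp i)
  set Sp := ∑ i ∈ univ.filter q, p i * (v i - μ) with hSp
  set Sm := ∑ i ∈ univ.filter (fun i => ¬ q i), p i * (μ - v i) with hSm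
  have hzero : Sp - Sm = 0 := by
    have h1 : Sp - Sm = ∑ i ∈ univ.filter q, p i * (v i - μ)
        + ∑ i ∈ univ.filter (fun i => ¬ q i), p i * (v i - μ) := by
      have h2 : ∑ i ∈ univ.filter (fun i => ¬ q i), p i * (v i - μ)
          = - ∑ i ∈ univ.filter (fun i => ¬ q i), p i * (μ - v i) := by
        rw [← Finset.sum_neg_distrib]
        exact Finset.sum_congr rfl fun i _ => by ring
      rw [hSp, hSm, h2]; ring
    rw [h1, Finset.sum_filter_add_sum_filter_not univ q (fun i => p i * (v i - μ))]
    have : ∑ i, p i * (v i - μ) = (∑ i, p i * v i) - (∑ i, p i) * μ := by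
      rw [Finset.sum_mul, ← Finset.sum_sub_distrib]
      exact Finset.sum_congr rfl fun i _ => by ring
    rw [this, hsum, one_mul, hμdef]
    ring
  have hSpSm : Sp = Sm := by linarith
  have hT : ∑ i, p i * |v i - μ| = Sp + Sm := by
    rw [← Finset.sum_filter_add_sum_filter_not univ q (fun i => p i * |v i - μ|)]
    congr 1
    · exact Finset.sum_congr rfl fun i hi => by
        rw [abs_of_nonneg (sub_nonneg.2 (Finset.mem_filter.mp hi).2)]
    · exact Finset.sum_congr rfl fun i hi => by
        have := (Finset.mem_filter.mp hi).2
        rw [hq] at this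
        rw [abs_of_neg (by push_neg at this; linarith), neg_sub]
  have hSp0 : 0 ≤ Sp := Finset.sum_nonneg fun i hi =>
    mul_nonneg (hp i) (sub_nonneg.2 (Finset.mem_filter.mp hi).2)
  have hbound1 : Sp ≤ P * (K - μ) := by
    rw [hP, Finset.sum_mul]
    refine Finset.sum_le_sum fun i hi => ?_
    have hvi : v i ≤ K := (abs_le.mp (hv i)).2
    exact mul_le_mul_of_nonneg_left (by linarith) (hp i)
  have hbound2 : Sm ≤ (1 - P) * (μ + K) := by
    have h1P : 1 - P = ∑ i ∈ univ.filter (fun i => ¬ q i), p i := by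
      rw [← hsum, ← Finset.sum_filter_add_sum_filter_not univ q p, hP]; ring
    rw [h1P, Finset.sum_mul]
    refine Finset.sum_le_sum fun i hi => ?_
    have hvi : -K ≤ v i := (abs_le.mp (hv i)).1
    exact mul_le_mul_of_nonneg_left (by linarith) (hp i)
  have hμ1 : -K ≤ μ := (abs_le.mp hμK).1
  have hμ2 : μ ≤ K := (abs_le.mp hμK).2
  rw [hT, ← hSpSm]
  -- Sp² ≤ P(1-P)(K-μ)(K+μ) ≤ K²/4
  nlinarith [mul_le_mul hbound1 (hSpSm ▸ hbound2) hSp0 (mul_nonneg hP0 (by linarith)),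
    sq_nonneg (2*P - 1), sq_nonneg μ, sq_nonneg (K - 2*Sp), mul_nonneg hP0 (by linarith : (0:ℝ) ≤ 1 - P)]

set_option maxHeartbeats 1000000 in
/-- Lipschitz property of the softmax function: for `d ≥ 1`, `α > 0`
and `x, y ∈ ℝ^d`, `‖softmax_α(x) - softmax_α(y)‖₁ ≤ (1/α) ‖x - y‖∞`. -/
theorem softmax_lipschitz
    (d : ℕ) (hd : 1 ≤ d) (α : ℝ) (hα : 0 < α) (x y : Fin d → ℝ) :
    ∑ i, |Real.exp (x i / α) / (∑ j, Real.exp (x j / α)) -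
        Real.exp (y i / α) / (∑ j, Real.exp (y j / α))|
      ≤ (1 / α) * ⨆ j, |x j - y j| := by
  haveI : Nonempty (Fin d) := Fin.pos_iff_nonempty.mp hd
  set v : Fin d → ℝ := fun i => x i - y i with hvdef
  set K : ℝ := ⨆ j, |x j - y j| with hKdef
  have hKv : ∀ i, |v i| ≤ K := fun i =>
    le_ciSup (f := fun j => |x j - y j|) (Set.Finite.bddAbove (Set.finite_range _)) i
  have hK0 : 0 ≤ K := le_trans (abs_nonneg _) (hKv (Classical.arbitrary _))
  set φ : ℝ → Fin d → ℝ := fun t i => Real.exp ((y i + t * v i) / α) with hφdef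
  set S : ℝ → ℝ := fun t => ∑ i, φ t i with hSdef
  have hSpos : ∀ t, 0 < S t := fun t =>
    Finset.sum_pos (fun i _ => Real.exp_pos _) Finset.univ_nonempty
  have hφpos : ∀ t i, 0 < φ t i := fun t i => Real.exp_pos _
  -- derivatives
  have hφd : ∀ i t, HasDerivAt (fun t => φ t i) (φ t i * (v i / α)) t := by
    intro i t
    have h1 : HasDerivAt (fun t : ℝ => (y i + t * v i) / α) (v i / α) t := by
      have := (((hasDerivAt_mul_const (x := t) (v i)).const_add (y i)).div_const α)
      simpa using this
    simpa [hφdef] using h1.exp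
  have hSd : ∀ t, HasDerivAt S (∑ i, φ t i * (v i / α)) t := by
    intro t
    exact HasDerivAt.fun_sum fun i _ => hφd i t
  let E := PiLp 1 (fun _ : Fin d => ℝ)
  let e : E ≃L[ℝ] (Fin d → ℝ) := PiLp.continuousLinearEquiv 1 ℝ _
  set F : ℝ → E := fun t => e.symm (fun i => φ t i / S t) with hFdef
  set G : ℝ → E := fun t => e.symm (fun i =>
    (φ t i * (v i / α) * S t - φ t i * (∑ j, φ t j * (v j / α))) / (S t) ^ 2) with hGdef
  have hFd : ∀ t, HasDerivAt F (G t) t := by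
    intro t
    have hpi : HasDerivAt (fun t => (fun i => φ t i / S t))
        (fun i => (φ t i * (v i / α) * S t - φ t i * (∑ j, φ t j * (v j / α))) / (S t) ^ 2) t := by
      rw [hasDerivAt_pi]
      intro i
      exact (hφd i t).div (hSd t) (hSpos t).ne'
    exact (e.symm.toContinuousLinearMap.hasFDerivAt.comp_hasDerivAt t hpi)
  -- norm of G
  have hGnorm : ∀ t, ‖G t‖ ≤ (1 / α) * K := by
    intro t
    have hnorm : ‖G t‖ = ∑ i,
        |(φ t i * (v i / α) * S t - φ t i * (∑ j, φ t j * (v j / α))) / (S t) ^ 2| := by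
      rw [hGdef]
      rw [PiLp.norm_eq_sum (by norm_num : 0 < (1 : ℝ≥0∞).toReal)]
      simp only [ENNReal.toReal_one, one_div_one, Real.rpow_one, Real.norm_eq_abs]
      exact Finset.sum_congr rfl fun i _ => rfl
    rw [hnorm]
    set p : Fin d → ℝ := fun i => φ t i / S t with hpdef
    have hpnn : ∀ i, 0 ≤ p i := fun i => div_nonneg (hφpos t i).le (hSpos t).le
    have hpsum : ∑ i, p i = 1 := by
      simp only [hpdef]
      rw [← Finset.sum_div]
      exact div_self (hSpos t).ne'
    have heq : ∀ i, (φ t i * (v i / α) * S t - φ t i * (∑ j, φ t j * (v j / α))) / (S t) ^ 2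
        = (1 / α) * (p i * (v i - ∑ j, p j * v j)) := by
      intro i
      simp only [hpdef]
      have hA1 : ∑ j, φ t j * (v j / α) = (∑ j, φ t j * v j) / α := by
        rw [Finset.sum_div]
        exact Finset.sum_congr rfl fun j _ => (mul_div_assoc _ _ _).symm
      have hA2 : ∑ j, φ t j / S t * v j = (∑ j, φ t j * v j) / S t := by
        rw [Finset.sum_div]
        exact Finset.sum_congr rfl fun j _ => div_mul_eq_mul_div _ _ _
      rw [hA1, hA2]
      have key : ∀ (a s A w : ℝ), s ≠ 0 → α ≠ 0 →
          (a * (w / α) * s - a * (A / α)) / s ^ 2 = 1 / α * (a / s * (w - A / s)) := by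
        intro a s A w hs hα'
        field_simp
      exact key _ _ _ _ (hSpos t).ne' hα.ne'
    calc ∑ i, |(φ t i * (v i / α) * S t - φ t i * (∑ j, φ t j * (v j / α))) / (S t) ^ 2|
        = ∑ i, (1 / α) * (p i * |v i - ∑ j, p j * v j|) := by
          refine Finset.sum_congr rfl fun i _ => ?_
          rw [heq i, abs_mul, abs_mul, abs_of_nonneg (by positivity : (0:ℝ) ≤ 1/α),
            abs_of_nonneg (hpnn i)]
      _ = (1 / α) * ∑ i, p i * |v i - ∑ j, p j * v j| := by rw [Finset.mul_sum]
      _ ≤ (1 / α) * K := by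
          refine mul_le_mul_of_nonneg_left ?_ (by positivity)
          exact mad_le p v hpnn hpsum K hK0 hKv
  -- mean value inequality
  have hmv : ‖F 1 - F 0‖ ≤ (1 / α) * K := by
    exact norm_image_sub_le_of_norm_deriv_le_segment_01'
      (fun t _ => (hFd t).hasDerivWithinAt) (fun t _ => hGnorm t)
  -- unfold
  have hF1 : ∀ i, F 1 i = Real.exp (x i / α) / (∑ j, Real.exp (x j / α)) := by
    intro i
    have h1 : ∀ i, φ 1 i = Real.exp (x i / α) := by
      intro i; rw [hφdef]; simp [hvdef]
    simp only [hFdef, hSdef]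
    show φ 1 i / (∑ j, φ 1 j) = _
    rw [h1 i]
    congr 1
    exact Finset.sum_congr rfl fun j _ => h1 j
  have hF0 : ∀ i, F 0 i = Real.exp (y i / α) / (∑ j, Real.exp (y j / α)) := by
    intro i
    have h1 : ∀ i, φ 0 i = Real.exp (y i / α) := by
      intro i; rw [hφdef]; simp
    simp only [hFdef, hSdef]
    show φ 0 i / (∑ j, φ 0 j) = _
    rw [h1 i]
    congr 1
    exact Finset.sum_congr rfl fun j _ => h1 j
  have : ‖F 1 - F 0‖ = ∑ i, |Real.exp (x i / α) / (∑ j, Real.exp (x j / α)) -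
      Real.exp (y i / α) / (∑ j, Real.exp (y j / α))| := by
    rw [PiLp.norm_eq_sum (by norm_num : 0 < (1 : ℝ≥0∞).toReal)]
    simp only [ENNReal.toReal_one, one_div_one, Real.rpow_one, Real.norm_eq_abs]
    refine Finset.sum_congr rfl fun i _ => ?_
    rw [show (F 1 - F 0) i = F 1 i - F 0 i from rfl, hF1 i, hF0 i]
  rw [← this]
  exact hmv
end
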